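/- For every γ > 0 there exists a unique γ' > 0 such that ψ(γ') = ψ(γ)², and this γ' satisfies γ' < γ. (In other words, Ξ(γ) = ψ⁻¹(ψ²(γ)) is well defined and Ξ(γ) < γ for all γ > 0.) -/

import Mathlib

open Real Filter MeasureTheory

/-- ψ(γ) = E[tanh(L/2)] for L ~ N(γ, 2γ). -/
noncomputable def psi (γ : ℝ) : ℝ :=
  ∫ x : ℝ, Real.tanh (x / 2) * (1 / Real.sqrt (4 * Real.pi * γ)) *
    Real.exp (-(x - γ) ^ 2 / (4 * γ))

/-!
Write `L = s²/2 + s Z` with `s = √(2γ)` and `Z` standard Gaussian, so that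
`ψ(γ) = psiStd s := E[tanh(s²/4 + s Z/2)]`. Differentiating under the integral and applying Stein's
lemma `E[Z h(Z)] = E[h'(Z)]` to `h = 1 - tanh²` gives `psiStd'(s) = (s/2) E[(1 - t)(1 - t²)]` with
`t = tanh(s²/4 + s Z/2)`, which is positive for `s > 0`. Hence `psiStd` is continuous and strictly
increasing on `[0, ∞)`, vanishing at `0` and below `1`. Then `0 < ψ(γ)² < ψ(γ)`, the intermediate
value theorem on `[0, √(2γ)]` gives the unique `s'` with `psiStd s' = ψ(γ)²`, and `γ' = s'²/2 < γ`.
-/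

open ProbabilityTheory Set
open scoped NNReal

namespace Real

lemma hasDerivAt_tanh (x : ℝ) : HasDerivAt tanh (1 - tanh x ^ 2) x := by
  have h := (hasDerivAt_sinh x).div (hasDerivAt_cosh x) (cosh_pos x).ne'
  rw [show sinh / cosh = tanh from funext fun y => (tanh_eq_sinh_div_cosh y).symm] at h
  refine h.congr_deriv ?_
  rw [tanh_eq_sinh_div_cosh]
  field_simp [(cosh_pos x).ne']

@[fun_prop]
lemma continuous_tanh : Continuous tanh :=
  continuous_iff_continuousAt.2 fun x => (hasDerivAt_tanh x).continuousAt

lemma one_sub_tanh_sq_pos (x : ℝ) : 0 < 1 - tanh x ^ 2 := by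
  linarith [tanh_sq_lt_one x]

lemma abs_one_sub_tanh_sq_le_one (x : ℝ) : |1 - tanh x ^ 2| ≤ 1 := by
  rw [abs_of_pos (one_sub_tanh_sq_pos x)]
  linarith [sq_nonneg (tanh x)]

end Real

namespace MeasureTheory

lemma integral_pos_of_forall_pos {α : Type*} [MeasurableSpace α] {μ : Measure α} [NeZero μ]
    {f : α → ℝ} (hf : Integrable f μ) (hpos : ∀ x, 0 < f x) : 0 < ∫ x, f x ∂μ := by
  rw [integral_pos_iff_support_of_nonneg (fun x => (hpos x).le) hf,
    Function.support_eq_univ fun x => (hpos x).ne']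
  exact Measure.measure_univ_pos.2 (NeZero.ne μ)

end MeasureTheory

namespace ProbabilityTheory

variable {μ : ℝ} {v : ℝ≥0}

lemma hasDerivAt_gaussianPDFReal (x : ℝ) :
    HasDerivAt (gaussianPDFReal μ v) (-((x - μ) / v) * gaussianPDFReal μ v x) x := by
  have h : HasDerivAt (fun y => -(y - μ) ^ 2 / (2 * v)) (-((x - μ) / v)) x := by
    refine ((((hasDerivAt_id' x).sub_const μ).pow 2).neg.div_const (2 * (v : ℝ))).congr_deriv ?_
    ring
  refine (h.exp.const_mul (√(2 * π * v))⁻¹).congr_deriv ?_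
  rw [gaussianPDFReal]
  ring

lemma integrable_gaussianReal_iff (hv : v ≠ 0) {f : ℝ → ℝ} :
    Integrable f (gaussianReal μ v) ↔ Integrable fun x => gaussianPDFReal μ v x * f x := by
  rw [gaussianReal_of_var_ne_zero _ hv, integrable_withDensity_iff_integrable_smul'
    (measurable_gaussianPDF μ v) (ae_of_all _ fun _ => gaussianPDF_lt_top)]
  simp only [toReal_gaussianPDF, smul_eq_mul]

lemma integrable_sub_gaussianReal (c : ℝ) : Integrable (fun x => x - c) (gaussianReal μ v) :=
  ((memLp_id_gaussianReal 1).integrable le_rfl).sub (integrable_const c)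

/-- Stein's lemma (Gaussian integration by parts). -/
lemma integral_sub_mul_gaussianReal (hv : v ≠ 0) {H H' : ℝ → ℝ}
    (hH : ∀ x, HasDerivAt H (H' x) x) {C C' : ℝ} (hHC : ∀ x, |H x| ≤ C) (hH'C : ∀ x, |H' x| ≤ C') :
    ∫ x, (x - μ) * H x ∂gaussianReal μ v = v * ∫ x, H' x ∂gaussianReal μ v := by
  have hHc : Continuous H := continuous_iff_continuousAt.2 fun x => (hH x).continuousAt
  have hH'm : AEStronglyMeasurable H' (gaussianReal μ v) :=
    (measurable_deriv H).aestronglyMeasurable.congr (ae_of_all _ fun x => (hH x).deriv)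
  have hint_H' : Integrable H' (gaussianReal μ v) :=
    .of_bound hH'm C' (ae_of_all _ hH'C)
  have hint_H : Integrable H (gaussianReal μ v) :=
    .of_bound hHc.aestronglyMeasurable C (ae_of_all _ hHC)
  have hint_xH : Integrable (fun x => (x - μ) * H x) (gaussianReal μ v) :=
    (integrable_sub_gaussianReal μ).mul_bdd hHc.aestronglyMeasurable (ae_of_all _ hHC)
  rw [integrable_gaussianReal_iff hv] at hint_H' hint_H hint_xH
  have hparts := integral_mul_deriv_eq_deriv_mul_of_integrable (fun x _ => hH x)
    (fun x _ => hasDerivAt_gaussianPDFReal (μ := μ) (v := v) x) ?_ ?_ ?_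
  · have hv' : (v : ℝ) ≠ 0 := NNReal.coe_ne_zero.2 hv
    rw [integral_gaussianReal_eq_integral_smul hv, integral_gaussianReal_eq_integral_smul hv]
    simp only [smul_eq_mul]
    have e1 : ∫ x, H x * (-((x - μ) / v) * gaussianPDFReal μ v x)
        = -(v : ℝ)⁻¹ * ∫ x, gaussianPDFReal μ v x * ((x - μ) * H x) := by
      rw [← integral_const_mul]
      congr 1 with x
      field_simp
    have e2 : ∫ x, H' x * gaussianPDFReal μ v x = ∫ x, gaussianPDFReal μ v x * H' x := by
      simp_rw [mul_comm (H' _)]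
    rw [e1, e2, neg_mul, neg_inj] at hparts
    rw [← hparts, mul_inv_cancel_left₀ hv']
  · refine (hint_xH.const_mul (-(v : ℝ)⁻¹)).congr (ae_of_all _ fun x => ?_)
    simp only [Pi.mul_apply]
    ring
  · rw [mul_comm]
    exact hint_H'
  · rw [mul_comm]
    exact hint_H

lemma gaussianReal_map_const_add_sqrt_mul (μ : ℝ) (v : ℝ≥0) :
    (gaussianReal 0 1).map (fun z => μ + √v * z) = gaussianReal μ v := by
  have hcomp : (fun z => μ + √v * z) = (μ + ·) ∘ (√v * ·) := rfl
  rw [hcomp, ← Measure.map_map (by fun_prop) (by fun_prop), gaussianReal_map_const_mul,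
    gaussianReal_map_const_add]
  congr 1
  · simp
  · ext
    simp

end ProbabilityTheory

noncomputable def psiStd (s : ℝ) : ℝ :=
  ∫ z, tanh (s ^ 2 / 4 + s / 2 * z) ∂gaussianReal 0 1

lemma psi_eq_psiStd {γ : ℝ} (hγ : 0 < γ) : psi γ = psiStd √(2 * γ) := by
  set v := (2 * γ).toNNReal
  have hv_coe : (v : ℝ) = 2 * γ := Real.coe_toNNReal _ (by positivity)
  have hv : v ≠ 0 := by
    rw [← NNReal.coe_ne_zero, hv_coe]
    positivity
  have hpdf : psi γ = ∫ x, gaussianPDFReal γ v x • tanh (x / 2) := by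
    unfold psi
    congr 1 with x
    rw [gaussianPDFReal, hv_coe, smul_eq_mul]
    ring_nf
  rw [hpdf, ← integral_gaussianReal_eq_integral_smul hv, ← gaussianReal_map_const_add_sqrt_mul,
    integral_map (by fun_prop) (by fun_prop), psiStd, hv_coe]
  congr 1 with z
  rw [Real.sq_sqrt (by positivity)]
  ring_nf

lemma integral_id_mul_one_sub_tanh_sq (a b : ℝ) :
    ∫ z, z * (1 - tanh (a + b * z) ^ 2) ∂gaussianReal 0 1
      = -(2 * b) * ∫ z, tanh (a + b * z) * (1 - tanh (a + b * z) ^ 2) ∂gaussianReal 0 1 := by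
  have hderiv : ∀ z, HasDerivAt (fun z => 1 - tanh (a + b * z) ^ 2)
      (-(2 * b) * (tanh (a + b * z) * (1 - tanh (a + b * z) ^ 2))) z := by
    intro z
    have hin : HasDerivAt (fun z => a + b * z) b z := by
      simpa using ((hasDerivAt_id z).const_mul b).const_add a
    refine (((hasDerivAt_tanh _).comp z hin).pow 2).const_sub 1 |>.congr_deriv ?_
    simp only [Function.comp_apply]
    ring
  have hbound : ∀ z, |-(2 * b) * (tanh (a + b * z) * (1 - tanh (a + b * z) ^ 2))| ≤ 2 * |b| := by
    intro z
    rw [abs_mul, abs_mul, abs_neg, abs_mul, abs_two]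
    have h1 := (abs_tanh_lt_one (a + b * z)).le
    have h2 := abs_one_sub_tanh_sq_le_one (a + b * z)
    have := mul_le_one₀ h1 (abs_nonneg _) h2
    nlinarith [abs_nonneg b]
  have := integral_sub_mul_gaussianReal (μ := 0) one_ne_zero hderiv
    (fun z => abs_one_sub_tanh_sq_le_one (a + b * z)) hbound
  rw [NNReal.coe_one, one_mul, integral_const_mul] at this
  simpa only [sub_zero] using this

lemma integral_one_sub_tanh_sq_mul_add (s : ℝ) :
    ∫ z, (1 - tanh (s ^ 2 / 4 + s / 2 * z) ^ 2) * (s / 2 + z / 2) ∂gaussianReal 0 1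
      = s / 2 * ∫ z, (1 - tanh (s ^ 2 / 4 + s / 2 * z)) * (1 - tanh (s ^ 2 / 4 + s / 2 * z) ^ 2)
          ∂gaussianReal 0 1 := by
  set t := fun z => tanh (s ^ 2 / 4 + s / 2 * z)
  have hsech : Integrable (fun z => 1 - t z ^ 2) (gaussianReal 0 1) :=
    .of_bound (by fun_prop) 1 (ae_of_all _ fun z => abs_one_sub_tanh_sq_le_one _)
  have htsech : Integrable (fun z => t z * (1 - t z ^ 2)) (gaussianReal 0 1) :=
    .of_bound (by fun_prop) 1 (ae_of_all _ fun z => by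
      rw [Real.norm_eq_abs, abs_mul]
      exact mul_le_one₀ (abs_tanh_lt_one _).le (abs_nonneg _) (abs_one_sub_tanh_sq_le_one _))
  have hzsech : Integrable (fun z => z * (1 - t z ^ 2)) (gaussianReal 0 1) :=
    ((memLp_id_gaussianReal 1).integrable le_rfl).mul_bdd
      (by fun_prop : Continuous fun z => 1 - t z ^ 2).aestronglyMeasurable
      (ae_of_all _ fun z => abs_one_sub_tanh_sq_le_one _)
  calc ∫ z, (1 - t z ^ 2) * (s / 2 + z / 2) ∂gaussianReal 0 1
      = ∫ z, (s / 2 * (1 - t z ^ 2) + 1 / 2 * (z * (1 - t z ^ 2))) ∂gaussianReal 0 1 := by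
        congr 1 with z
        ring
    _ = s / 2 * ∫ z, 1 - t z ^ 2 ∂gaussianReal 0 1
          + 1 / 2 * ∫ z, z * (1 - t z ^ 2) ∂gaussianReal 0 1 := by
        rw [integral_add (hsech.const_mul _) (hzsech.const_mul _), integral_const_mul,
          integral_const_mul]
    _ = s / 2 * ((∫ z, 1 - t z ^ 2 ∂gaussianReal 0 1)
          - ∫ z, t z * (1 - t z ^ 2) ∂gaussianReal 0 1) := by
        rw [integral_id_mul_one_sub_tanh_sq]
        ring
    _ = s / 2 * ∫ z, (1 - t z) * (1 - t z ^ 2) ∂gaussianReal 0 1 := by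
        rw [← integral_sub hsech htsech]
        congr 2 with z
        ring

lemma hasDerivAt_tanh_quarter_sq_add (z s : ℝ) :
    HasDerivAt (fun s => tanh (s ^ 2 / 4 + s / 2 * z))
      ((1 - tanh (s ^ 2 / 4 + s / 2 * z) ^ 2) * (s / 2 + z / 2)) s := by
  have hin : HasDerivAt (fun s => s ^ 2 / 4 + s / 2 * z) (s / 2 + z / 2) s := by
    refine (((hasDerivAt_pow 2 s).div_const 4).add
      (((hasDerivAt_id s).div_const 2).mul_const z)).congr_deriv ?_
    ring
  exact (hasDerivAt_tanh _).comp s hin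

lemma hasDerivAt_psiStd (s₀ : ℝ) :
    HasDerivAt psiStd (s₀ / 2 * ∫ z, (1 - tanh (s₀ ^ 2 / 4 + s₀ / 2 * z)) *
      (1 - tanh (s₀ ^ 2 / 4 + s₀ / 2 * z) ^ 2) ∂gaussianReal 0 1) s₀ := by
  have hbound : ∀ z, ∀ s ∈ Metric.ball s₀ 1,
      ‖(1 - tanh (s ^ 2 / 4 + s / 2 * z) ^ 2) * (s / 2 + z / 2)‖ ≤ (|s₀| + 1 + |z|) / 2 := by
    intro z s hs
    have hs' : |s| ≤ |s₀| + 1 := by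
      have := abs_sub_abs_le_abs_sub s s₀
      rw [Metric.mem_ball, Real.dist_eq] at hs
      linarith
    rw [Real.norm_eq_abs, abs_mul]
    calc |1 - tanh (s ^ 2 / 4 + s / 2 * z) ^ 2| * |s / 2 + z / 2| ≤ 1 * ((|s| + |z|) / 2) := by
          refine mul_le_mul (abs_one_sub_tanh_sq_le_one _) ?_ (abs_nonneg _) zero_le_one
          have := abs_add_le (s / 2) (z / 2)
          rw [abs_div, abs_div, abs_two] at this
          linarith
      _ ≤ (|s₀| + 1 + |z|) / 2 := by linarith
  have hD := hasDerivAt_integral_of_dominated_loc_of_deriv_le (μ := gaussianReal 0 1)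
    (Metric.ball_mem_nhds s₀ one_pos) (.of_forall fun s => by fun_prop)
    (.of_bound (by fun_prop) 1 (ae_of_all _ fun z => (abs_tanh_lt_one _).le)) (by fun_prop)
    (ae_of_all _ hbound)
    ((((integrable_const (|s₀| + 1)).add
      ((memLp_id_gaussianReal 1).integrable le_rfl).abs).div_const 2))
    (ae_of_all _ fun z s _ => hasDerivAt_tanh_quarter_sq_add z s)
  exact integral_one_sub_tanh_sq_mul_add s₀ ▸ hD.2

lemma continuous_psiStd : Continuous psiStd :=
  continuous_iff_continuousAt.2 fun s => (hasDerivAt_psiStd s).continuousAt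

lemma strictMonoOn_psiStd : StrictMonoOn psiStd (Ici 0) := by
  refine strictMonoOn_of_deriv_pos (convex_Ici 0) continuous_psiStd.continuousOn fun s hs => ?_
  rw [interior_Ici, mem_Ioi] at hs
  rw [(hasDerivAt_psiStd s).deriv]
  refine mul_pos (half_pos hs) (integral_pos_of_forall_pos ?_ fun z => ?_)
  · refine .of_bound (by fun_prop) 2 (ae_of_all _ fun z => ?_)
    have h1 : |1 - tanh (s ^ 2 / 4 + s / 2 * z)| ≤ 2 :=
      (abs_sub _ _).trans (by linarith [abs_one (α := ℝ), abs_tanh_lt_one (s ^ 2 / 4 + s / 2 * z)])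
    rw [Real.norm_eq_abs, abs_mul]
    simpa using mul_le_mul h1 (abs_one_sub_tanh_sq_le_one _) (abs_nonneg _) zero_le_two
  · exact mul_pos (sub_pos.2 (tanh_lt_one _)) (one_sub_tanh_sq_pos _)

lemma psiStd_zero : psiStd 0 = 0 := by
  simp [psiStd]

lemma psiStd_lt_one (s : ℝ) : psiStd s < 1 := by
  have hint : Integrable (fun z => tanh (s ^ 2 / 4 + s / 2 * z)) (gaussianReal 0 1) :=
    .of_bound (by fun_prop) 1 (ae_of_all _ fun z => (abs_tanh_lt_one _).le)
  have hpos := integral_pos_of_forall_pos (f := fun z => 1 - tanh (s ^ 2 / 4 + s / 2 * z))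
    ((integrable_const 1).sub hint)
    fun z => sub_pos.2 (tanh_lt_one (s ^ 2 / 4 + s / 2 * z))
  rw [integral_sub (integrable_const 1) hint] at hpos
  simp only [integral_const, probReal_univ, smul_eq_mul, one_mul] at hpos
  rw [psiStd]
  linarith

theorem Xi_well_defined_and_decreasing (γ : ℝ) (hγ : 0 < γ) :
    ∃ γ' : ℝ, 0 < γ' ∧ psi γ' = (psi γ) ^ 2 ∧ γ' < γ ∧
      ∀ γ'' : ℝ, 0 < γ'' → psi γ'' = (psi γ) ^ 2 → γ'' = γ' := by
  set s := √(2 * γ)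
  have hs : 0 < s := Real.sqrt_pos.2 (by positivity)
  have hψ : 0 < psi γ ∧ psi γ < 1 := by
    rw [psi_eq_psiStd hγ, ← psiStd_zero]
    exact ⟨strictMonoOn_psiStd (mem_Ici.2 le_rfl) hs.le hs, psiStd_lt_one s⟩
  have hmem : psi γ ^ 2 ∈ Ioo (psiStd 0) (psiStd s) := by
    rw [psiStd_zero, ← psi_eq_psiStd hγ]
    exact ⟨pow_pos hψ.1 2, by nlinarith⟩
  obtain ⟨s', ⟨hs'0, hs's⟩, hs'⟩ :=
    intermediate_value_Ioo hs.le continuous_psiStd.continuousOn hmem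
  refine ⟨s' ^ 2 / 2, by positivity, ?_, ?_, fun γ'' hγ'' h => ?_⟩
  · rw [psi_eq_psiStd (by positivity), show 2 * (s' ^ 2 / 2) = s' ^ 2 by ring,
      Real.sqrt_sq hs'0.le, hs']
  · have : s ^ 2 = 2 * γ := Real.sq_sqrt (by positivity)
    nlinarith
  · rw [psi_eq_psiStd hγ'', ← hs'] at h
    have := strictMonoOn_psiStd.injOn (Real.sqrt_nonneg _) hs'0.le h
    rw [← this, Real.sq_sqrt (by positivity)]
    ring
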